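/- Let C_s denote the number of planar rooted trees with signature s, with C_∅ = 1 (the unique single-node tree has empty signature). For every nonempty composition s = (s(1),…,s(a)), C_s = Σ ∏_{i=1}^{s(1)} C_{s_i}, where the sum ranges over all tuples (s_1, s_2, …, s_{s(1)}) of (possibly empty) compositions whose concatenation s_1 ⊕ s_2 ⊕ ⋯ ⊕ s_{s(1)} equals (s(2),…,s(a)). -/

import Mathlib

/-!
Removing the root of a tree with signature `a :: l` (necessarily `a ≠ 0`) leaves an ordered list
of `a` subtrees whose signatures concatenate to `l`. Grouping these lists by the tuple of their
signatures, the fibre over `(s₁, …, s_a)` is a product of the sets of trees with signature `sᵢ`,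
so its cardinality is `C_{s₁} ⋯ C_{s_a}`. The same decomposition shows, by induction on the length
of the signature, that all these sets are finite, so that cardinalities add up over the
finitely many tuples.
-/

/-- A planar rooted tree: a root together with a (possibly empty) ordered list of subtrees. -/
inductive PTree : Type where
  | node : List PTree → PTree

namespace PTree

/-- The signature of a planar rooted tree: the numbers of children of its internal
nodes, listed in preorder. -/
def signature : PTree → List ℕ
  | node [] => []
  | node (t :: ts) =>
    (t :: ts).length :: ((t :: ts).attach.map (fun x => signature x.1)).flatten
decreasing_by
  have := List.sizeOf_lt_of_mem x.2
  simp at this ⊢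
  omega

/-- The preorder word of a planar rooted tree: `true` (= N) for each internal node and
`false` (= E) for each leaf, nodes listed in preorder. -/
def word : PTree → List Bool
  | node ts => (!ts.isEmpty) :: (ts.attach.map (fun x => word x.1)).flatten
decreasing_by
  have := List.sizeOf_lt_of_mem x.2
  simp at this ⊢
  omega

end PTree

namespace List

variable {α β : Type*}

abbrev splittings (k : ℕ) (l : List α) : Set (List (List α)) :=
  {L | L.length = k ∧ L.flatten = l}

theorem finite_length_eq_forall_mem {s : Set α} (hs : s.Finite) (n : ℕ) :
    {l : List α | l.length = n ∧ ∀ x ∈ l, x ∈ s}.Finite := by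
  have := hs.to_subtype
  refine ((finite_length_eq s n).image (map Subtype.val)).subset ?_
  rintro l ⟨rfl, hl⟩
  exact ⟨l.attach.map fun x => ⟨x.1, hl _ x.2⟩, by simp, by simp⟩

theorem finite_splittings (k : ℕ) (l : List α) : (splittings k l).Finite := by
  refine (finite_length_eq_forall_mem l.sublists.finite_toSet k).subset ?_
  rintro L ⟨hk, rfl⟩
  exact ⟨hk, fun c hc => by simpa using sublist_flatten_of_mem hc⟩

def mapEqConsEquiv (f : α → β) (b : β) (l : List β) :
    {x : List α // x.map f = b :: l} ≃ {a : α // f a = b} × {x : List α // x.map f = l} where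
  toFun x := match x with
    | ⟨a :: x, h⟩ => (⟨a, (cons_eq_cons.1 h).1⟩, ⟨x, (cons_eq_cons.1 h).2⟩)
  invFun p := ⟨p.1.1 :: p.2.1, by simp [p.1.2, p.2.2]⟩
  left_inv := by rintro ⟨_ | ⟨a, x⟩, h⟩ <;> simp at h ⊢
  right_inv _ := rfl

instance (f : α → β) : Unique {x : List α // x.map f = []} where
  default := ⟨[], rfl⟩
  uniq := by rintro ⟨x, h⟩; simpa using h

theorem card_map_eq (f : α → β) (l : List β) :
    Nat.card {x : List α // x.map f = l} = (l.map fun b => Nat.card {a : α // f a = b}).prod := by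
  induction l with
  | nil => simp
  | cons b l ih =>
    rw [Nat.card_congr (mapEqConsEquiv f b l), Nat.card_prod, ih, map_cons, prod_cons]

theorem finite_map_eq (f : α → β) {l : List β} (h : ∀ b ∈ l, Finite {a : α // f a = b}) :
    Finite {x : List α // x.map f = l} := by
  induction l with
  | nil => infer_instance
  | cons b l ih =>
    have := h b mem_cons_self
    have := ih fun b' hb' => h b' (mem_cons_of_mem b hb')
    exact .of_equiv _ (mapEqConsEquiv f b l).symm

end List

namespace PTree

def equivList : PTree ≃ List PTree where
  toFun | node ts => ts
  invFun := node
  left_inv := by rintro ⟨ts⟩; rfl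
  right_inv _ := rfl

@[simp]
theorem signature_node_nil : (node []).signature = [] := by
  simp [signature]

@[simp]
theorem signature_node_cons (t : PTree) (ts : List PTree) :
    (node (t :: ts)).signature = (ts.length + 1) :: ((t :: ts).map signature).flatten := by
  simp [signature]

theorem signature_eq_nil_iff {T : PTree} : T.signature = [] ↔ T = node [] := by
  rcases T with ⟨_ | ⟨t, ts⟩⟩ <;> simp

theorem signature_ne_zero_cons (T : PTree) (l : List ℕ) : T.signature ≠ 0 :: l := by
  rcases T with ⟨_ | ⟨t, ts⟩⟩ <;> simp

theorem signature_node_eq_cons_iff {a : ℕ} (ha : a ≠ 0) (ts : List PTree) (l : List ℕ) :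
    (node ts).signature = a :: l ↔ ts.length = a ∧ (ts.map signature).flatten = l := by
  rcases ts with _ | ⟨t, ts⟩
  · simp [Ne.symm ha]
  · simp [eq_comm]

instance : Subsingleton {T : PTree // T.signature = []} :=
  ⟨fun ⟨_, h₁⟩ ⟨_, h₂⟩ =>
    Subtype.ext <| (signature_eq_nil_iff.1 h₁).trans (signature_eq_nil_iff.1 h₂).symm⟩

def signatureConsEquiv {a : ℕ} (ha : a ≠ 0) (l : List ℕ) :
    {T : PTree // T.signature = a :: l} ≃
      Σ L : List.splittings a l, {ts : List PTree // ts.map signature = L} :=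
  (equivList.subtypeEquiv (q := fun ts => ts.length = a ∧ (ts.map signature).flatten = l)
      fun ⟨ts⟩ => signature_node_eq_cons_iff ha ts l).trans
    (Equiv.sigmaSubtypeFiberEquivSubtype (List.map signature) fun ts => by simp).symm

instance finite_signature_eq (l : List ℕ) : Finite {T : PTree // T.signature = l} := by
  induction h : l.length using Nat.strong_induction_on generalizing l with
  | _ n ih =>
  rcases l with _ | ⟨_ | a, l⟩
  · infer_instance
  · have : IsEmpty {T : PTree // T.signature = 0 :: l} :=
      ⟨fun T => signature_ne_zero_cons T.1 l T.2⟩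
    infer_instance
  · have := (List.finite_splittings (a + 1) l).to_subtype
    have (L : List.splittings (a + 1) l) :
        Finite {ts : List PTree // ts.map signature = L} :=
      List.finite_map_eq signature fun c hc => by
        have hc_le : c.length ≤ l.length := L.2.2 ▸ (List.sublist_flatten_of_mem hc).length_le
        exact ih c.length (by simp only [List.length_cons] at h; omega) c rfl
    exact .of_equiv _ (signatureConsEquiv a.succ_ne_zero l).symm

end PTree

/-- The fundamental recurrence for `s`-Catalan numbers: for every nonempty composition
`s`, the number of trees with signature `s` equals the sum, over all tuples
`(s₁, …, s_{s(1)})` of possibly empty compositions with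
`s₁ ⊕ ⋯ ⊕ s_{s(1)} = (s(2),…,s(a))`, of the products `C_{s₁} ⋯ C_{s_{s(1)}}`. -/
theorem fundamental_recurrence (s : List ℕ) (hs : ∀ x ∈ s, 0 < x) (hne : s ≠ []) :
    Nat.card {T : PTree // T.signature = s} =
      ∑ᶠ L ∈ {L : List (List ℕ) | L.length = s.headI ∧ L.flatten = s.tail},
        (L.map (fun c => Nat.card {T : PTree // T.signature = c})).prod := by
  obtain ⟨a, l, rfl⟩ := List.exists_cons_of_ne_nil hne
  have ha : a ≠ 0 := (hs a List.mem_cons_self).ne'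
  have := (List.finite_splittings a l).fintype
  have (L : List.splittings a l) : Finite {ts : List PTree // ts.map PTree.signature = L} :=
    List.finite_map_eq _ fun c _ => PTree.finite_signature_eq c
  rw [Nat.card_congr (PTree.signatureConsEquiv ha l), Nat.card_sigma, ← finsum_eq_sum_of_fintype,
    List.headI_cons, List.tail_cons, ← finsum_set_coe_eq_finsum_mem]
  exact finsum_congr fun L => List.card_map_eq PTree.signature L
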